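/- For all real a, b > 0, the function z ↦ 1/|P(z)| is Lebesgue-integrable on ℂ, and the polar-coordinates identity ∫_ℂ |P(z)|⁻¹ dℓ(z) = (1/(ab)) · ∫₀^∞ F(r/a, r/b) dr holds; in particular C_P := ∫_ℂ |P(z)|⁻¹ dℓ(z) is finite. -/

import Mathlib

open MeasureTheory Real

/-- `F(α, β) = ∫₀^{2π} (|α e^{iθ} − 1| · |β e^{iθ} + 1|)⁻¹ dθ`, as a value in `[0, ∞]`. -/
noncomputable def Ffun (α β : ℝ) : ENNReal :=
  ∫⁻ θ in Set.Icc (0:ℝ) (2 * Real.pi),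
    ENNReal.ofReal
      ((‖(α * Complex.exp (Complex.I * θ) - 1 : ℂ)‖ *
        ‖(β * Complex.exp (Complex.I * θ) + 1 : ℂ)‖)⁻¹)


/-!
In polar coordinates `z = r e^{iθ}` we have
`|P(z)| = r · a · b · |(r/a) e^{iθ} − 1| · |(r/b) e^{iθ} + 1|`, so the Jacobian `r` cancels and the
angular integral is `F(r/a, r/b) / (ab)`; Mathlib's polar coordinates use `θ ∈ (−π, π)`, which
periodicity moves to `[0, 2π]`.

Integrability: by partial fractions `|P|⁻¹` is dominated by a combination of `|z − c|⁻¹` over the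
three roots `c`, which are locally integrable in the plane, and `|P(z)|⁻¹ = O(|z|⁻³)` at infinity.
-/

open Set Filter Asymptotics
open scoped ENNReal

theorem Function.Periodic.setLIntegral_Ioc_add_eq {T : ℝ} [Fact (0 < T)] {f : ℝ → ℝ≥0∞}
    (hf : Function.Periodic f T) (s t : ℝ) :
    ∫⁻ x in Ioc s (s + T), f x = ∫⁻ x in Ioc t (t + T), f x := by
  have key (t : ℝ) : ∫⁻ x in Ioc t (t + T), f x = ∫⁻ y, hf.lift y := by
    simpa only [Function.Periodic.lift_coe] using AddCircle.lintegral_preimage T t hf.lift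
  rw [key, key]

theorem Complex.lintegral_eq_lintegral_Ioi_mul_lintegral_Icc {f : ℂ → ℝ≥0∞} (hf : Measurable f) :
    ∫⁻ z, f z = ∫⁻ r in Ioi 0, ENNReal.ofReal r *
      ∫⁻ θ in Icc 0 (2 * π), f (r * Complex.exp (Complex.I * θ)) := by
  have hsymm (p : ℝ × ℝ) : Complex.polarCoord.symm p = p.1 * Complex.exp (Complex.I * p.2) := by
    rw [Complex.polarCoord_symm_apply, mul_comm Complex.I, Complex.exp_mul_I,
      ← Complex.ofReal_cos, ← Complex.ofReal_sin]
  have hmeas : Measurable fun p : ℝ × ℝ => ENNReal.ofReal p.1 • f (Complex.polarCoord.symm p) := by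
    simp_rw [hsymm]
    exact measurable_fst.ennreal_ofReal.smul (hf.comp (by fun_prop))
  rw [← Complex.lintegral_comp_polarCoord_symm, polarCoord_target, Measure.volume_eq_prod,
    ← Measure.prod_restrict, lintegral_prod _ hmeas.aemeasurable]
  refine setLIntegral_congr_fun measurableSet_Ioi fun r _ => ?_
  have hper : Function.Periodic (fun θ : ℝ => f (r * Complex.exp (Complex.I * θ))) (2 * π) := by
    intro θ
    simp only [Complex.ofReal_add, Complex.ofReal_mul, Complex.ofReal_ofNat, mul_add,
      Complex.exp_add]
    rw [show Complex.I * (2 * π) = 2 * π * Complex.I by ring, Complex.exp_two_pi_mul_I, mul_one]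
  have : Fact (0 < 2 * π) := ⟨two_pi_pos⟩
  have hshift := hper.setLIntegral_Ioc_add_eq (-π) 0
  rw [show -π + 2 * π = π by ring, zero_add] at hshift
  simp_rw [hsymm, smul_eq_mul]
  rw [lintegral_const_mul' _ _ ENNReal.ofReal_ne_top, setLIntegral_congr Ioo_ae_eq_Ioc, hshift,
    setLIntegral_congr Ioc_ae_eq_Icc]

theorem norm_mul_sub_mul_add_of_norm_eq_one {a b r : ℝ} (ha : 0 < a) (hb : 0 < b) (hr : 0 ≤ r)
    {e : ℂ} (he : ‖e‖ = 1) :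
    ‖r * e * (r * e - a) * (r * e + b)‖ =
      r * (a * b) * (‖((r / a : ℝ) : ℂ) * e - 1‖ * ‖((r / b : ℝ) : ℂ) * e + 1‖) := by
  have hsub : (r : ℂ) * e - a = a * (((r / a : ℝ) : ℂ) * e - 1) := by
    push_cast
    field_simp [Complex.ofReal_ne_zero.2 ha.ne']
  have hadd : (r : ℂ) * e + b = b * (((r / b : ℝ) : ℂ) * e + 1) := by
    push_cast
    field_simp [Complex.ofReal_ne_zero.2 hb.ne']
  rw [hsub, hadd]
  simp only [norm_mul, Complex.norm_real, Real.norm_of_nonneg hr, Real.norm_of_nonneg ha.le,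
    Real.norm_of_nonneg hb.le, he]
  ring

theorem lintegral_ofReal_inv_norm_eq {a b : ℝ} (ha : 0 < a) (hb : 0 < b) :
    ∫⁻ z : ℂ, ENNReal.ofReal ‖z * (z - a) * (z + b)‖⁻¹ =
      ENNReal.ofReal (a * b)⁻¹ * ∫⁻ r in Ioi 0, Ffun (r / a) (r / b) := by
  rw [Complex.lintegral_eq_lintegral_Ioi_mul_lintegral_Icc (by fun_prop),
    ← lintegral_const_mul' _ _ ENNReal.ofReal_ne_top]
  refine setLIntegral_congr_fun measurableSet_Ioi fun r (hr : 0 < r) => ?_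
  rw [Ffun, ← lintegral_const_mul' _ _ ENNReal.ofReal_ne_top,
    ← lintegral_const_mul' _ _ ENNReal.ofReal_ne_top]
  refine lintegral_congr fun θ => ?_
  have he : ‖Complex.exp (Complex.I * θ)‖ = 1 := by
    rw [mul_comm]
    exact Complex.norm_exp_ofReal_mul_I θ
  rw [← ENNReal.ofReal_mul hr.le, ← ENNReal.ofReal_mul (by positivity),
    norm_mul_sub_mul_add_of_norm_eq_one ha hb hr.le he, mul_inv, mul_inv r, ← mul_assoc,
    ← mul_assoc, mul_inv_cancel₀ hr.ne', one_mul]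

theorem measurable_uncurry_Ffun : Measurable (Function.uncurry Ffun) := by
  have : Measurable fun q : (ℝ × ℝ) × ℝ => ENNReal.ofReal
      ((‖(q.1.1 * Complex.exp (Complex.I * q.2) - 1 : ℂ)‖ *
        ‖(q.1.2 * Complex.exp (Complex.I * q.2) + 1 : ℂ)‖)⁻¹) := by
    fun_prop
  exact this.lintegral_prod_right'

theorem locallyIntegrable_inv_norm_sub {E : Type*} [NormedAddCommGroup E] [NormedSpace ℝ E]
    [FiniteDimensional ℝ E] [MeasurableSpace E] [BorelSpace E] (μ : Measure E)
    [μ.IsAddHaarMeasure] (hE : 2 ≤ Module.finrank ℝ E) (c : E) :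
    LocallyIntegrable (fun x => ‖x - c‖⁻¹) μ := by
  have h0 : LocallyIntegrable (fun x : E => ‖x‖⁻¹) μ :=
    locallyIntegrable_of_norm_le_rpow (C := 1) (α := 1) (by omega) (by exact_mod_cast hE)
      (ae_of_all _ fun x => by simp [Real.rpow_neg_one]) (by fun_prop)
  rw [← map_sub_right_eq_self μ c] at h0
  exact (locallyIntegrable_map_homeomorph (Homeomorph.subRight c)).1 h0

theorem isBigO_cocompact_inv_norm_sub {E : Type*} [NormedAddCommGroup E] [ProperSpace E] (c : E) :
    (fun x => ‖x - c‖⁻¹) =O[cocompact E] fun x => (1 + ‖x‖)⁻¹ := by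
  refine IsBigO.of_bound 2 ?_
  filter_upwards [tendsto_norm_cocompact_atTop.eventually_ge_atTop (2 * ‖c‖ + 1)] with x hx
  have hxc : (1 + ‖x‖) / 2 ≤ ‖x - c‖ := by linarith [norm_sub_norm_le x c]
  rw [norm_inv, norm_inv, norm_norm, Real.norm_of_nonneg (by positivity)]
  calc ‖x - c‖⁻¹ ≤ ((1 + ‖x‖) / 2)⁻¹ := inv_anti₀ (by positivity) hxc
    _ = 2 * (1 + ‖x‖)⁻¹ := by rw [inv_div, div_eq_mul_inv]

theorem inv_mul_sub_mul_sub_eq {K : Type*} [Field K] {u v w z : K} (huv : u ≠ v) (huw : u ≠ w)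
    (hvw : v ≠ w) (hzu : z ≠ u) (hzv : z ≠ v) (hzw : z ≠ w) :
    ((z - u) * (z - v) * (z - w))⁻¹ = ((u - v) * (u - w))⁻¹ * (z - u)⁻¹ +
      ((v - u) * (v - w))⁻¹ * (z - v)⁻¹ + ((w - u) * (w - v))⁻¹ * (z - w)⁻¹ := by
  field_simp [sub_ne_zero.2 huv, sub_ne_zero.2 huw, sub_ne_zero.2 hvw, sub_ne_zero.2 hzu,
    sub_ne_zero.2 hzv, sub_ne_zero.2 hzw]
  ring

theorem norm_inv_mul_sub_mul_sub_le {𝕜 : Type*} [NormedField 𝕜] {u v w : 𝕜} (huv : u ≠ v)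
    (huw : u ≠ w) (hvw : v ≠ w) (z : 𝕜) :
    ‖(z - u) * (z - v) * (z - w)‖⁻¹ ≤ ‖(u - v) * (u - w)‖⁻¹ * ‖z - u‖⁻¹ +
      ‖(v - u) * (v - w)‖⁻¹ * ‖z - v‖⁻¹ + ‖(w - u) * (w - v)‖⁻¹ * ‖z - w‖⁻¹ := by
  by_cases hz : z = u ∨ z = v ∨ z = w
  · have : ‖(z - u) * (z - v) * (z - w)‖⁻¹ = 0 := by rcases hz with rfl | rfl | rfl <;> simp
    rw [this]
    positivity
  · push Not at hz
    obtain ⟨hzu, hzv, hzw⟩ := hz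
    rw [← norm_inv, inv_mul_sub_mul_sub_eq huv huw hvw hzu hzv hzw]
    refine norm_add₃_le.trans_eq ?_
    simp only [norm_mul, norm_inv]

theorem integrable_inv_norm_mul_sub_mul_sub {u v w : ℂ} (huv : u ≠ v) (huw : u ≠ w)
    (hvw : v ≠ w) : Integrable fun z : ℂ => ‖(z - u) * (z - v) * (z - w)‖⁻¹ := by
  have hdim : 2 ≤ Module.finrank ℝ ℂ := Complex.finrank_real_complex.ge
  have hloc : LocallyIntegrable fun z : ℂ => ‖(z - u) * (z - v) * (z - w)‖⁻¹ := by
    refine ((((locallyIntegrable_inv_norm_sub volume hdim u).smul ‖(u - v) * (u - w)‖⁻¹).add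
      ((locallyIntegrable_inv_norm_sub volume hdim v).smul ‖(v - u) * (v - w)‖⁻¹)).add
      ((locallyIntegrable_inv_norm_sub volume hdim w).smul ‖(w - u) * (w - v)‖⁻¹)).mono
      (by fun_prop) (ae_of_all _ fun z => ?_)
    simp only [Pi.add_apply, Pi.smul_apply, smul_eq_mul]
    rw [Real.norm_of_nonneg (by positivity), Real.norm_of_nonneg (by positivity)]
    exact norm_inv_mul_sub_mul_sub_le huv huw hvw z
  have hO : (fun z : ℂ => ‖(z - u) * (z - v) * (z - w)‖⁻¹) =O[cocompact ℂ]
      fun z => (1 + ‖z‖) ^ (-3 : ℝ) := by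
    simp only [norm_mul, mul_inv]
    refine (((isBigO_cocompact_inv_norm_sub u).mul (isBigO_cocompact_inv_norm_sub v)).mul
      (isBigO_cocompact_inv_norm_sub w)).congr_right fun z => ?_
    rw [Real.rpow_neg (by positivity), show (3 : ℝ) = (3 : ℕ) by norm_num, Real.rpow_natCast,
      ← inv_pow]
    ring
  exact hloc.integrable_of_isBigO_cocompact hO
    ((integrable_one_add_norm (by norm_num [Complex.finrank_real_complex])).integrableAtFilter _)

theorem stmt9 (a b : ℝ) (ha : 0 < a) (hb : 0 < b) :
    Integrable
      (fun z : ℂ => ‖z * (z - (a:ℂ)) * (z + (b:ℂ))‖⁻¹) volume ∧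
    (∫ z : ℂ, ‖z * (z - (a:ℂ)) * (z + (b:ℂ))‖⁻¹)
      = (1 / (a * b)) * ∫ r in Set.Ioi (0:ℝ), (Ffun (r / a) (r / b)).toReal := by
  have hint : Integrable fun z : ℂ => ‖z * (z - a) * (z + b)‖⁻¹ := by
    have h0a : (0 : ℂ) ≠ a := by exact_mod_cast ha.ne
    have h0b : (0 : ℂ) ≠ -b := by exact_mod_cast (neg_neg_of_pos hb).ne'
    have hab : (a : ℂ) ≠ -b := by exact_mod_cast (by linarith : a ≠ -b)
    simpa using integrable_inv_norm_mul_sub_mul_sub h0a h0b hab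
  have hlin := lintegral_ofReal_inv_norm_eq ha hb
  have hfin : ∫⁻ r in Ioi 0, Ffun (r / a) (r / b) ≠ ∞ := by
    have hlt := hint.lintegral_lt_top
    rw [hlin] at hlt
    exact (ENNReal.lt_top_of_mul_ne_top_right hlt.ne (by positivity)).ne
  have hFm : Measurable fun r : ℝ => Ffun (r / a) (r / b) :=
    measurable_uncurry_Ffun.comp (f := fun r : ℝ => (r / a, r / b)) (by fun_prop)
  refine ⟨hint, ?_⟩
  rw [integral_eq_lintegral_of_nonneg_ae (ae_of_all _ fun z => by positivity)
    hint.aestronglyMeasurable, hlin, integral_toReal hFm.aemeasurable (ae_lt_top hFm hfin),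
    ENNReal.toReal_mul, ENNReal.toReal_ofReal (by positivity), one_div]
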